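/- arXiv:1609.03446 — 6 statements merged into one kernel-verified Lean document; each statement's English description precedes it below -/
import Mathlib

section
/- Let T : V → W be a linear isomorphism between vector spaces of arbitrary (possibly infinite) dimension with specified bases 𝒱, 𝒲. Then the coefficient graph of T (edges v → w when T(v) has nonzero w-coefficient) admits a perfect matching, i.e., there is a bijection σ : 𝒱 → 𝒲 with the σ(v)-coefficient of T(v) nonzero for every v. -/
/-!
Work with the matrix of `T` in the two bases, and call `A × B` an invertible block when
`x ↦ (T x)|_B` is a bijection from the vectors supported on `A` to those supported on `B`.
Inside an invertible block every row `i` can be matched to a column `j` with nonzero entry such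
that the block with row `i` and column `j` deleted is still invertible: expanding
`1 = (S (T eᵢ))ᵢ`, with `S` the inverse of the block, gives a column `j` where both the entry of
`T` and the cofactor entry `(S e_j)ᵢ` are nonzero. The same holds for every column, so for a
countable block alternating rows and columns (back and forth) matches everything.

In general, call `(C, D)` a splitting pair when `T` maps the vectors supported on `C` onto those
supported on `D`. Splitting pairs are closed under unions, every countable set lies in a countable
splitting pair, and the difference of two splitting pairs is an invertible block. Hence a matching
whose vertex sets form a splitting pair can always be enlarged to cover any given vertex, and a
maximal one (Zorn) is perfect.
-/

open Finsupp Set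

theorem Set.Countable.exists_countable_superset_stable {α : Type*} (g : α → Set α)
    (hg : ∀ a, (g a).Countable) {s : Set α} (hs : s.Countable) :
    ∃ t, s ⊆ t ∧ t.Countable ∧ ∀ a ∈ t, g a ⊆ t := by
  let step : Set α → Set α := fun u => u ∪ ⋃ a ∈ u, g a
  have hcount : ∀ n, (step^[n] s).Countable := by
    intro n
    induction n with
    | zero => exact hs
    | succ n ih =>
      rw [Function.iterate_succ_apply']
      exact ih.union (ih.biUnion fun a _ => hg a)
  refine ⟨⋃ n, step^[n] s, subset_iUnion (fun n => step^[n] s) 0, countable_iUnion hcount,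
    fun a ha => ?_⟩
  obtain ⟨n, hn⟩ := mem_iUnion.1 ha
  refine Subset.trans ?_ (subset_iUnion _ (n + 1))
  rw [Function.iterate_succ_apply']
  exact subset_union_of_subset_right (subset_biUnion_of_mem hn) _

namespace CoeffMatching

section Matching

variable {α β : Type*} {G : α → β → Prop}

structure IsMatching (G : α → β → Prop) (R : Set (α × β)) : Prop where
  adj : ∀ p ∈ R, G p.1 p.2
  fst_eq_iff : ∀ p ∈ R, ∀ q ∈ R, p.1 = q.1 ↔ p.2 = q.2

theorem isMatching_singleton {a : α} {b : β} (h : G a b) : IsMatching G {(a, b)} :=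
  ⟨by simpa using h, by simp⟩

theorem IsMatching.union {R S : Set (α × β)} (hR : IsMatching G R) (hS : IsMatching G S)
    (h₁ : Disjoint (Prod.fst '' R) (Prod.fst '' S))
    (h₂ : Disjoint (Prod.snd '' R) (Prod.snd '' S)) : IsMatching G (R ∪ S) := by
  have hne : ∀ p ∈ R, ∀ q ∈ S, p.1 ≠ q.1 ∧ p.2 ≠ q.2 := fun p hp q hq =>
    ⟨h₁.ne_of_mem (mem_image_of_mem _ hp) (mem_image_of_mem _ hq),
      h₂.ne_of_mem (mem_image_of_mem _ hp) (mem_image_of_mem _ hq)⟩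
  refine ⟨fun p hp => hp.elim (hR.adj p) (hS.adj p), ?_⟩
  rintro p (hp | hp) q (hq | hq)
  · exact hR.fst_eq_iff p hp q hq
  · exact iff_of_false (hne p hp q hq).1 (hne p hp q hq).2
  · exact iff_of_false (hne q hq p hp).1.symm (hne q hq p hp).2.symm
  · exact hS.fst_eq_iff p hp q hq

theorem IsMatching.iUnion {ι : Sort*} {R : ι → Set (α × β)} (hR : Directed (· ⊆ ·) R)
    (h : ∀ k, IsMatching G (R k)) : IsMatching G (⋃ k, R k) := by
  refine ⟨fun p hp => ?_, fun p hp q hq => ?_⟩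
  · obtain ⟨k, hk⟩ := mem_iUnion.1 hp
    exact (h k).adj p hk
  · obtain ⟨a, ha⟩ := mem_iUnion.1 hp
    obtain ⟨b, hb⟩ := mem_iUnion.1 hq
    obtain ⟨c, hac, hbc⟩ := hR a b
    exact (h c).fst_eq_iff p (hac ha) q (hbc hb)

theorem IsMatching.exists_equiv {R : Set (α × β)} (h : IsMatching G R)
    (h₁ : Prod.fst '' R = univ) (h₂ : Prod.snd '' R = univ) : ∃ σ : α ≃ β, ∀ a, G a (σ a) := by
  have hcover : ∀ a, ∃ b, (a, b) ∈ R := fun a => by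
    obtain ⟨p, hp, rfl⟩ : a ∈ Prod.fst '' R := h₁ ▸ mem_univ a
    exact ⟨p.2, hp⟩
  choose σ hσ using hcover
  have hσ_bij : Function.Bijective σ := by
    refine ⟨fun a a' ha => (h.fst_eq_iff _ (hσ a) _ (hσ a')).2 ha, fun b => ?_⟩
    obtain ⟨p, hp, rfl⟩ : b ∈ Prod.snd '' R := h₂ ▸ mem_univ b
    exact ⟨p.1, (h.fst_eq_iff _ (hσ p.1) _ hp).1 rfl⟩
  exact ⟨Equiv.ofBijective σ hσ_bij, fun a => h.adj _ (hσ a)⟩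

end Matching

variable {K ι κ : Type*} [Field K]

def coeffGraph (f : (ι →₀ K) → κ →₀ K) (i : ι) (j : κ) : Prop :=
  f (single i 1) j ≠ 0

section Block

variable {f : (ι →₀ K) →ₗ[K] κ →₀ K} {A : Set ι} {B : Set κ}

/-- The `A × B` block of the matrix of `f` is invertible. -/
structure IsInvertibleBlock (f : (ι →₀ K) →ₗ[K] κ →₀ K) (A : Set ι) (B : Set κ) : Prop where
  eq_zero_of_eqOn_zero : ∀ x ∈ supported K K A, EqOn (f x) 0 B → x = 0
  exists_eqOn : ∀ y : κ →₀ K, ∃ x ∈ supported K K A, EqOn (f x) y B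

theorem apply_eq_sum (f : (ι →₀ K) →ₗ[K] κ →₀ K) (x : ι →₀ K) (j : κ) :
    f x j = x.sum fun i c => c * f (single i 1) j := by
  conv_lhs => rw [← x.sum_single]
  rw [map_finsuppSum, Finsupp.sum_apply]
  refine Finsupp.sum_congr fun i _ => ?_
  rw [← smul_single_one, map_smul, Finsupp.smul_apply, smul_eq_mul]

/-- Here `u` is column `j₀` of the inverse of the block. -/
theorem IsInvertibleBlock.diff_singleton (h : IsInvertibleBlock f A B) {i₀ : ι} {j₀ : κ}
    {u : ι →₀ K} (hu : u ∈ supported K K A) (hfu : EqOn (f u) (single j₀ 1) B) (hu₀ : u i₀ ≠ 0) :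
    IsInvertibleBlock f (A \ {i₀}) (B \ {j₀}) := by
  constructor
  · intro x hx hfx
    have hx_eq : x = f x j₀ • u := by
      rw [← sub_eq_zero]
      refine h.eq_zero_of_eqOn_zero _
        (sub_mem (supported_mono sdiff_subset hx) (Submodule.smul_mem _ _ hu)) fun j hj => ?_
      rcases eq_or_ne j j₀ with rfl | hj₀
      · simp [hfu hj]
      · simp [hfu hj, hfx ⟨hj, hj₀⟩, single_eq_of_ne hj₀]
    have hx₀ : x i₀ = 0 := (mem_supported' _ _).1 hx i₀ fun h => h.2 rfl
    rw [hx_eq, Finsupp.smul_apply, smul_eq_mul, mul_eq_zero, or_iff_left hu₀] at hx₀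
    rw [hx_eq, hx₀, zero_smul]
  · intro y
    obtain ⟨w, hw, hfw⟩ := h.exists_eqOn y
    refine ⟨w - (w i₀ / u i₀) • u, (mem_supported' _ _).2 fun i hi => ?_, fun j hj => ?_⟩
    · by_cases hi₀ : i = i₀
      · simp [hi₀, div_mul_cancel₀ _ hu₀]
      · have hiA : i ∉ A := fun hiA => hi ⟨hiA, hi₀⟩
        simp [(mem_supported' _ _).1 hw i hiA, (mem_supported' _ _).1 hu i hiA]
    · simp [hfw hj.1, hfu hj.1, single_eq_of_ne hj.2]

theorem IsInvertibleBlock.exists_diff_singleton_left (h : IsInvertibleBlock f A B) {i₀ : ι}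
    (hi₀ : i₀ ∈ A) :
    ∃ j₀ ∈ B, coeffGraph f i₀ j₀ ∧ IsInvertibleBlock f (A \ {i₀}) (B \ {j₀}) := by
  classical
  choose u hu hfu using fun j : κ => h.exists_eqOn (single j 1)
  set v := f (single i₀ 1)
  set s := v.support.filter (· ∈ B)
  have hexpand : ∑ j ∈ s, v j • u j = single i₀ 1 := by
    rw [← sub_eq_zero]
    refine h.eq_zero_of_eqOn_zero _
      (sub_mem (sum_mem fun j _ => Submodule.smul_mem _ _ (hu j)) (single_mem_supported K 1 hi₀))
      fun j hj => ?_
    by_cases hvj : v j = 0 <;> simp [map_sum, hfu _ hj, single_apply, s, v, hj, hvj]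
  have hsum : ∑ j ∈ s, v j * u j i₀ = 1 := by
    simpa [← Finsupp.finsetSum_apply] using congrArg (· i₀) hexpand
  obtain ⟨j₀, hj₀, hne⟩ := Finset.exists_ne_zero_of_sum_ne_zero (hsum ▸ one_ne_zero)
  exact ⟨j₀, (Finset.mem_filter.1 hj₀).2, left_ne_zero_of_mul hne,
    h.diff_singleton (hu j₀) (hfu j₀) (right_ne_zero_of_mul hne)⟩

theorem IsInvertibleBlock.exists_diff_singleton_right (h : IsInvertibleBlock f A B) {j₀ : κ}
    (hj₀ : j₀ ∈ B) :
    ∃ i₀ ∈ A, coeffGraph f i₀ j₀ ∧ IsInvertibleBlock f (A \ {i₀}) (B \ {j₀}) := by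
  obtain ⟨u, hu, hfu⟩ := h.exists_eqOn (single j₀ 1)
  have hsum : (u.sum fun i c => c * f (single i 1) j₀) ≠ 0 := by
    rw [← apply_eq_sum, hfu hj₀, single_eq_same]
    exact one_ne_zero
  obtain ⟨i₀, hi₀, hne⟩ := Finset.exists_ne_zero_of_sum_ne_zero hsum
  exact ⟨i₀, hu hi₀, right_ne_zero_of_mul hne,
    h.diff_singleton hu hfu (left_ne_zero_of_mul hne)⟩

end Block

section BackAndForth

variable {f : (ι →₀ K) →ₗ[K] κ →₀ K} {A : Set ι} {B : Set κ} {R : Set (ι × κ)}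

def IsExtendableMatching (f : (ι →₀ K) →ₗ[K] κ →₀ K) (A : Set ι) (B : Set κ)
    (R : Set (ι × κ)) : Prop :=
  IsMatching (coeffGraph f) R ∧ R ⊆ A ×ˢ B ∧
    IsInvertibleBlock f (A \ Prod.fst '' R) (B \ Prod.snd '' R)

theorem IsExtendableMatching.insert (hR : IsExtendableMatching f A B R) {i : ι} {j : κ}
    (hi : i ∈ A \ Prod.fst '' R) (hj : j ∈ B \ Prod.snd '' R) (hij : coeffGraph f i j)
    (h : IsInvertibleBlock f ((A \ Prod.fst '' R) \ {i}) ((B \ Prod.snd '' R) \ {j})) :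
    IsExtendableMatching f A B (insert (i, j) R) := by
  refine ⟨?_, insert_subset ⟨hi.1, hj.1⟩ hR.2.1, ?_⟩
  · rw [insert_eq]
    exact (isMatching_singleton hij).union hR.1 (by simpa using hi.2) (by simpa using hj.2)
  · rwa [image_insert_eq, image_insert_eq, ← union_singleton, ← union_singleton, ← sdiff_sdiff,
      ← sdiff_sdiff]

theorem IsExtendableMatching.exists_mem_fst (hR : IsExtendableMatching f A B R) {i : ι}
    (hi : i ∈ A) : ∃ R', IsExtendableMatching f A B R' ∧ R ⊆ R' ∧ i ∈ Prod.fst '' R' := by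
  by_cases hiR : i ∈ Prod.fst '' R
  · exact ⟨R, hR, subset_rfl, hiR⟩
  obtain ⟨j, hj, hij, h⟩ := hR.2.2.exists_diff_singleton_left ⟨hi, hiR⟩
  exact ⟨_, hR.insert ⟨hi, hiR⟩ hj hij h, subset_insert _ _,
    mem_image_of_mem _ (mem_insert _ _)⟩

theorem IsExtendableMatching.exists_mem_snd (hR : IsExtendableMatching f A B R) {j : κ}
    (hj : j ∈ B) : ∃ R', IsExtendableMatching f A B R' ∧ R ⊆ R' ∧ j ∈ Prod.snd '' R' := by
  by_cases hjR : j ∈ Prod.snd '' R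
  · exact ⟨R, hR, subset_rfl, hjR⟩
  obtain ⟨i, hi, hij, h⟩ := hR.2.2.exists_diff_singleton_right ⟨hj, hjR⟩
  exact ⟨_, hR.insert hi ⟨hj, hjR⟩ hij h, subset_insert _ _,
    mem_image_of_mem _ (mem_insert _ _)⟩

theorem IsInvertibleBlock.exists_isMatching (h : IsInvertibleBlock f A B) (hA : A.Countable)
    (hB : B.Countable) :
    ∃ R, IsMatching (coeffGraph f) R ∧ Prod.fst '' R = A ∧ Prod.snd '' R = B := by
  have := hA.to_subtype
  have := hB.to_subtype
  let _ : Encodable (A ⊕ B) := Encodable.ofCountable _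
  let target : A ⊕ B → Order.Cofinal {R // IsExtendableMatching f A B R} := Sum.elim
    (fun i => ⟨{R | i.1 ∈ Prod.fst '' R.1}, fun R => by
      obtain ⟨R', hR', hRR', hi⟩ := R.2.exists_mem_fst i.2
      exact ⟨⟨R', hR'⟩, hi, hRR'⟩⟩)
    (fun j => ⟨{R | j.1 ∈ Prod.snd '' R.1}, fun R => by
      obtain ⟨R', hR', hRR', hj⟩ := R.2.exists_mem_snd j.2
      exact ⟨⟨R', hR'⟩, hj, hRR'⟩⟩)
  let seq := Order.sequenceOfCofinals
    (⟨∅, ⟨⟨by simp, by simp⟩, empty_subset _, by simpa⟩⟩ : {R // IsExtendableMatching f A B R})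
    target
  have hsub : (⋃ n, (seq n).1) ⊆ A ×ˢ B := iUnion_subset fun n => (seq n).2.2.1
  refine ⟨⋃ n, (seq n).1, IsMatching.iUnion ?_ fun n => (seq n).2.1,
    (image_subset_iff.2 fun p hp => (hsub hp).1).antisymm fun i hi => ?_,
    (image_subset_iff.2 fun p hp => (hsub hp).2).antisymm fun j hj => ?_⟩
  · exact ((Subtype.mono_coe _).comp (Order.sequenceOfCofinals.monotone _ _)).directed_le
  · exact image_mono (subset_iUnion _ _)
      (Order.sequenceOfCofinals.encode_mem _ target (Sum.inl ⟨i, hi⟩))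
  · exact image_mono (subset_iUnion _ _)
      (Order.sequenceOfCofinals.encode_mem _ target (Sum.inr ⟨j, hj⟩))

end BackAndForth

section Splitting

variable {T : (ι →₀ K) ≃ₗ[K] κ →₀ K} {C C' : Set ι} {D D' : Set κ}

def IsSplittingPair (T : (ι →₀ K) ≃ₗ[K] κ →₀ K) (C : Set ι) (D : Set κ) : Prop :=
  (supported K K C).map T.toLinearMap = supported K K D

theorem IsSplittingPair.apply_mem (h : IsSplittingPair T C D) {x : ι →₀ K}
    (hx : x ∈ supported K K C) : T x ∈ supported K K D :=
  h ▸ Submodule.mem_map_of_mem hx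

theorem IsSplittingPair.mem_of_apply_mem (h : IsSplittingPair T C D) {x : ι →₀ K}
    (hx : T x ∈ supported K K D) : x ∈ supported K K C := by
  rwa [← h, Submodule.mem_map_equiv, LinearEquiv.symm_apply_apply] at hx

theorem IsSplittingPair.union (h : IsSplittingPair T C D) (h' : IsSplittingPair T C' D') :
    IsSplittingPair T (C ∪ C') (D ∪ D') := by
  rw [IsSplittingPair, supported_union, Submodule.map_sup, h, h', supported_union]

theorem IsSplittingPair.iUnion {ι' : Type*} {C : ι' → Set ι} {D : ι' → Set κ}
    (h : ∀ k, IsSplittingPair T (C k) (D k)) : IsSplittingPair T (⋃ k, C k) (⋃ k, D k) := by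
  rw [IsSplittingPair, supported_iUnion, Submodule.map_iSup, supported_iUnion]
  exact iSup_congr h

theorem isSplittingPair_of_support_subset
    (h₁ : ∀ i ∈ C, ↑(T (single i 1)).support ⊆ D)
    (h₂ : ∀ j ∈ D, ↑(T.symm (single j 1)).support ⊆ C) : IsSplittingPair T C D := by
  refine le_antisymm ?_ ?_
  · rw [supported_eq_span_single K C, Submodule.map_span_le]
    rintro _ ⟨i, hi, rfl⟩
    exact h₁ i hi
  · rw [supported_eq_span_single K D, Submodule.span_le]
    rintro _ ⟨j, hj, rfl⟩
    exact (Submodule.mem_map_equiv _).2 (h₂ j hj)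

theorem exists_countable_isSplittingPair (T : (ι →₀ K) ≃ₗ[K] κ →₀ K) {A₀ : Set ι} {B₀ : Set κ}
    (hA₀ : A₀.Countable) (hB₀ : B₀.Countable) :
    ∃ C D, A₀ ⊆ C ∧ B₀ ⊆ D ∧ C.Countable ∧ D.Countable ∧ IsSplittingPair T C D := by
  obtain ⟨t, hst, ht, hstable⟩ :=
    ((hA₀.image Sum.inl).union (hB₀.image Sum.inr)).exists_countable_superset_stable
      (Sum.elim (fun i => Sum.inr '' ↑(T (single i 1)).support)
        (fun j => Sum.inl '' ↑(T.symm (single j 1)).support))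
      (fun a => by cases a <;> exact (Finset.countable_toSet _).image _)
  exact ⟨Sum.inl ⁻¹' t, Sum.inr ⁻¹' t, fun i hi => hst (Or.inl ⟨i, hi, rfl⟩),
    fun j hj => hst (Or.inr ⟨j, hj, rfl⟩), ht.preimage Sum.inl_injective,
    ht.preimage Sum.inr_injective, isSplittingPair_of_support_subset
      (fun i hi j hj => hstable _ hi ⟨j, hj, rfl⟩) (fun j hj i hi => hstable _ hj ⟨i, hi, rfl⟩)⟩

theorem IsSplittingPair.isInvertibleBlock_diff (h : IsSplittingPair T C D)
    (h' : IsSplittingPair T C' D') : IsInvertibleBlock T.toLinearMap (C' \ C) (D' \ D) := by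
  classical
  constructor
  · intro x hx hTx
    have hxC : x ∈ supported K K C := h.mem_of_apply_mem <| (mem_supported' _ _).2 fun j hj => by
      by_cases hj' : j ∈ D'
      · simpa using hTx ⟨hj', hj⟩
      · exact (mem_supported' _ _).1 (h'.apply_mem (supported_mono sdiff_subset hx)) j hj'
    exact (Submodule.disjoint_def.1 (disjoint_supported_supported disjoint_sdiff_right)) x hxC hx
  · intro y
    set x₀ := T.symm (y.filter (· ∈ D'))
    have hx₀ : x₀ ∈ supported K K C' :=
      h'.mem_of_apply_mem (by simpa [x₀] using (restrictDom K K D' y).2)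
    refine ⟨x₀.filter (· ∉ C), (mem_supported' _ _).2 fun i hi => ?_, fun j hj => ?_⟩
    · by_cases hiC : i ∈ C
      · simp [hiC]
      · simp [hiC, (mem_supported' _ _).1 hx₀ i fun hiC' => hi ⟨hiC', hiC⟩]
    · have hrest : x₀ - x₀.filter (· ∉ C) ∈ supported K K C :=
        (mem_supported' _ _).2 fun i hi => by simp [hi]
      have hTrest := (mem_supported' _ _).1 (h.apply_mem hrest) j hj.2
      rw [map_sub, Finsupp.sub_apply, sub_eq_zero] at hTrest
      simp [← hTrest, x₀, hj.1]

end Splitting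

section Zorn

variable {T : (ι →₀ K) ≃ₗ[K] κ →₀ K} {R : Set (ι × κ)}

def IsSplittingMatching (T : (ι →₀ K) ≃ₗ[K] κ →₀ K) (R : Set (ι × κ)) : Prop :=
  IsMatching (coeffGraph T) R ∧ IsSplittingPair T (Prod.fst '' R) (Prod.snd '' R)

theorem isSplittingMatching_sUnion {c : Set (Set (ι × κ))}
    (hc : ∀ R ∈ c, IsSplittingMatching T R) (hchain : IsChain (· ⊆ ·) c) :
    IsSplittingMatching T (⋃₀ c) := by
  rw [sUnion_eq_iUnion]
  refine ⟨IsMatching.iUnion hchain.directed fun R => (hc R R.2).1, ?_⟩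
  rw [image_iUnion, image_iUnion]
  exact IsSplittingPair.iUnion fun R => (hc R R.2).2

theorem IsSplittingMatching.exists_superset (hR : IsSplittingMatching T R) {C₀ : Set ι}
    {D₀ : Set κ} (hC₀ : C₀.Countable) (hD₀ : D₀.Countable) (h₀ : IsSplittingPair T C₀ D₀) :
    ∃ R', IsSplittingMatching T R' ∧ R ⊆ R' ∧ C₀ ⊆ Prod.fst '' R' ∧ D₀ ⊆ Prod.snd '' R' := by
  set C := Prod.fst '' R
  set D := Prod.snd '' R
  have hsplit := hR.2.union h₀
  obtain ⟨R₁, hR₁, hfst, hsnd⟩ := (hR.2.isInvertibleBlock_diff hsplit).exists_isMatching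
    (by rw [union_sdiff_left]; exact hC₀.mono sdiff_subset)
    (by rw [union_sdiff_left]; exact hD₀.mono sdiff_subset)
  have hfst' : Prod.fst '' (R ∪ R₁) = C ∪ C₀ := by
    rw [image_union, hfst, union_sdiff_cancel subset_union_left]
  have hsnd' : Prod.snd '' (R ∪ R₁) = D ∪ D₀ := by
    rw [image_union, hsnd, union_sdiff_cancel subset_union_left]
  refine ⟨R ∪ R₁, ⟨hR.1.union hR₁ ?_ ?_, by rwa [hfst', hsnd']⟩, subset_union_left,
    hfst' ▸ subset_union_right, hsnd' ▸ subset_union_right⟩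
  · exact hfst ▸ disjoint_sdiff_right
  · exact hsnd ▸ disjoint_sdiff_right

theorem exists_equiv_coeffGraph (T : (ι →₀ K) ≃ₗ[K] κ →₀ K) :
    ∃ σ : ι ≃ κ, ∀ i, coeffGraph T i (σ i) := by
  obtain ⟨R, hR⟩ := zorn_subset {R | IsSplittingMatching T R} fun c hc hchain =>
    ⟨⋃₀ c, isSplittingMatching_sUnion hc hchain, fun _ => subset_sUnion_of_mem⟩
  have hcover {A₀ : Set ι} {B₀ : Set κ} (hA₀ : A₀.Countable) (hB₀ : B₀.Countable) :
      A₀ ⊆ Prod.fst '' R ∧ B₀ ⊆ Prod.snd '' R := by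
    obtain ⟨C₀, D₀, hAC, hBD, hC₀, hD₀, h₀⟩ := exists_countable_isSplittingPair T hA₀ hB₀
    obtain ⟨R', hR', hRR', hC, hD⟩ := hR.prop.exists_superset hC₀ hD₀ h₀
    rw [← hR.eq_of_subset hR' hRR'] at hC hD
    exact ⟨hAC.trans hC, hBD.trans hD⟩
  exact hR.prop.1.exists_equiv
    (eq_univ_of_forall fun i => (hcover (countable_singleton i) countable_empty).1 rfl)
    (eq_univ_of_forall fun j => (hcover countable_empty (countable_singleton j)).2 rfl)

end Zorn

end CoeffMatching

/-- Let `V`, `W` be vector spaces of arbitrary (possibly infinite) dimension over a field `K`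
with specified bases (of arbitrary cardinality) `bV : ι → V` and `bW : κ → W`, and let `T : V ≃ₗ[K] W`
be a linear isomorphism.  The coefficient graph of `T` (with an edge from `v ∈ 𝒱` to
`w ∈ 𝒲` whenever the `w`-coefficient of `T v` is nonzero) admits a perfect matching;
equivalently, there is a bijection `σ : ι ≃ κ` such that for every `i`, the
`σ i`-coefficient of `T (bV i)` in the basis `bW` is nonzero. -/
theorem coefficient_graph_of_iso_has_perfect_matching_infinite
    (K V W : Type*) [Field K] [AddCommGroup V] [Module K V]
    [AddCommGroup W] [Module K W]
    (ι κ : Type*) 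
    (bV : Module.Basis ι K V) (bW : Module.Basis κ K W) (T : V ≃ₗ[K] W) :
    ∃ σ : ι ≃ κ, ∀ i : ι, bW.repr (T (bV i)) (σ i) ≠ 0 := by
  obtain ⟨σ, hσ⟩ :=
    CoeffMatching.exists_equiv_coeffGraph ((bV.repr.symm.trans T).trans bW.repr)
  exact ⟨σ, fun i => by simpa [CoeffMatching.coeffGraph] using hσ i⟩
end

section
/- Let ⋯ ← V_i ← V_{i+1} ← ⋯ be a long exact sequence of finite-dimensional vector spaces with differentials δ, bounded (only finitely many V_i nonzero), and with a fixed basis 𝒱_i of each V_i. Define the coefficient graph with vertex set ⊔_i 𝒱_i and an edge v' ← v (for v ∈ 𝒱_{i+1}, v' ∈ 𝒱_i) whenever δ(v) has a nonzero v'-coefficient. Then this graph admits a perfect matching. -/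
/-!
Choose in each `V (i+1)` a set `R i` of basis vectors spanning a complement of `ker (δ i)`;
then `δ i` maps the span of `R i` isomorphically onto its image. By exactness, `δ (i+1)`
restricted to the span of `R (i+1)` and followed by the projection onto the coordinates outside
`R i` is an isomorphism, so its square matrix has nonzero determinant and hence a nonzero
term in the Leibniz expansion: a bijection `R (i+1) ≃ (R i)ᶜ` along nonzero coefficients.
Every basis vector lies in exactly one `R i` or one `(R i)ᶜ`, so these bijections together
form a perfect matching.
-/

/-- The coefficient-graph edge relation for a complex of based vector spaces
`V i = ι i →₀ K` (with the standard bases) and differentials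
`δ i : V (i+1) →ₗ[K] V i`: there is an edge `v' ← v`, for `v` a basis vector of
`V (i+1)` and `v'` a basis vector of `V i`, whenever `δ i v` has a nonzero
`v'`-coefficient. -/
def CoeffEdge (K : Type*) [Field K] (ι : ℤ → Type*)
    (δ : ∀ i : ℤ, (ι (i + 1) →₀ K) →ₗ[K] (ι i →₀ K)) :
    (Σ i : ℤ, ι i) → (Σ i : ℤ, ι i) → Prop :=
  fun v w => ∃ h : v.1 = w.1 + 1,
    (δ w.1 (Finsupp.single (cast (congrArg ι h) v.2) 1)) w.2 ≠ 0

open Function Finsupp LinearMap Module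

theorem Matrix.exists_perm_forall_apply_ne_zero_of_det_ne_zero {K n : Type*} [CommRing K]
    [Fintype n] [DecidableEq n] {M : Matrix n n K} (hM : M.det ≠ 0) :
    ∃ σ : Equiv.Perm n, ∀ j, M (σ j) j ≠ 0 := by
  contrapose! hM
  rw [Matrix.det_apply]
  refine Finset.sum_eq_zero fun σ _ => ?_
  obtain ⟨j, hj⟩ := hM σ
  exact smul_eq_zero_of_right _ (Finset.prod_eq_zero (Finset.mem_univ j) hj)

section

variable {K M α β : Type*} [Field K] [AddCommGroup M] [Module K M]

theorem LinearEquiv.exists_equiv_forall_apply_single_ne_zero [Finite α] [Finite β]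
    (L : (β →₀ K) ≃ₗ[K] (α →₀ K)) : ∃ σ : β ≃ α, ∀ b, L (single b 1) (σ b) ≠ 0 := by
  classical
  have := Fintype.ofFinite α
  have := Fintype.ofFinite β
  have hcard : Fintype.card β = Fintype.card α := by
    simpa only [finrank_finsupp_self] using L.finrank_eq
  let e := Fintype.equivOfCardEq hcard
  obtain ⟨τ, hτ⟩ := Matrix.exists_perm_forall_apply_ne_zero_of_det_ne_zero
    (L.isUnit_det Finsupp.basisSingleOne (Finsupp.basisSingleOne.reindex e.symm)).ne_zero
  exact ⟨τ.trans e, fun b => by simpa [LinearMap.toMatrix_apply] using hτ b⟩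

theorem exists_isCompl_ker_supported (f : (α →₀ K) →ₗ[K] M) :
    ∃ s : Set α, IsCompl (ker f) (supported K K s) := by
  set v := fun a => f (single a 1)
  have hf : linearCombination K v = f := lhom_ext fun a c => by
    simp [v, ← map_smul]
  obtain ⟨s, -, -, hspan, hli⟩ :=
    exists_linearIndepOn_extension (linearIndepOn_empty K v) (Set.empty_subset Set.univ)
  refine ⟨s, Submodule.disjoint_def.2 fun x hker hs => ?_, ?_⟩
  · exact linearIndepOn_iff.1 hli x hs (hf ▸ hker)
  · rw [codisjoint_comm, ← Submodule.map_eq_range_iff, ← hf,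
      ← span_image_eq_map_linearCombination, range_linearCombination, ← Set.image_univ]
    exact le_antisymm (Submodule.span_mono (Set.image_mono (Set.subset_univ s)))
      (Submodule.span_le.2 hspan)

theorem finrank_supported [Finite α] (s : Set α) :
    finrank K (supported K K s) = Nat.card s := by
  classical
  have := Fintype.ofFinite α
  rw [(supportedEquivFinsupp s).finrank_eq, finrank_finsupp_self, Nat.card_eq_fintype_card]

section IsComplKerSupported

variable [Finite α] {f : (α →₀ K) →ₗ[K] M} {s : Set α}
  (hs : IsCompl (ker f) (supported K K s))
include hs

theorem finrank_ker_eq_card_compl_of_isCompl : finrank K (ker f) = Nat.card ↥sᶜ := by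
  have := Submodule.finrank_add_eq_of_isCompl hs
  rw [finrank_supported, finrank_eq_nat_card_basis Finsupp.basisSingleOne,
    ← Set.ncard_add_ncard_compl s] at this
  simp only [Nat.card_coe_set_eq] at this ⊢
  omega

theorem finrank_range_eq_card_of_isCompl : finrank K (range f) = Nat.card s := by
  have := Submodule.finrank_add_eq_of_isCompl hs
  rw [finrank_supported, ← finrank_range_add_finrank_ker f] at this
  omega

end IsComplKerSupported

theorem exists_equiv_compl_forall_apply_single_ne_zero [Finite α] [Finite β]
    {f : (α →₀ K) →ₗ[K] M} {g : (β →₀ K) →ₗ[K] (α →₀ K)} (hfg : range g = ker f)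
    {s : Set α} {t : Set β} (hs : IsCompl (ker f) (supported K K s))
    (ht : IsCompl (ker g) (supported K K t)) :
    ∃ σ : t ≃ ↥sᶜ, ∀ b : t, g (single (b : β) 1) (σ b) ≠ 0 := by
  classical
  let L : (t →₀ K) →ₗ[K] (↥sᶜ →₀ K) :=
    lsubtypeDomain sᶜ ∘ₗ g ∘ₗ lmapDomain K K Subtype.val
  have hL : Injective L := by
    rw [← ker_eq_bot, Submodule.eq_bot_iff]
    intro y hy
    set x := mapDomain Subtype.val y
    have hxt : x ∈ supported K K t := by
      refine (mem_supported K x).2 fun b hb => ?_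
      obtain ⟨b, -, rfl⟩ := Finset.mem_image.1 (mapDomain_support hb)
      exact b.2
    have hgx : g x ∈ supported K K s := by
      refine (mem_supported' K (g x)).2 fun a ha => ?_
      exact subtypeDomain_eq_zero_iff'.1 hy a ha
    have hgx0 : g x = 0 := Submodule.disjoint_def.1 hs.1 _ (hfg ▸ mem_range_self g x) hgx
    have hx0 : x = 0 := Submodule.disjoint_def.1 ht.1 _ hgx0 hxt
    exact mapDomain_injective Subtype.val_injective (hx0.trans mapDomain_zero.symm)
  have hcard : finrank K (t →₀ K) = finrank K (↥sᶜ →₀ K) := by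
    rw [finrank_eq_nat_card_basis Finsupp.basisSingleOne,
      finrank_eq_nat_card_basis Finsupp.basisSingleOne, ← finrank_range_eq_card_of_isCompl ht, hfg,
      finrank_ker_eq_card_compl_of_isCompl hs]
  obtain ⟨σ, hσ⟩ := (L.linearEquivOfInjective hL hcard).exists_equiv_forall_apply_single_ne_zero
  exact ⟨σ, fun b => by simpa [L, lsubtypeDomain_apply] using hσ b⟩

end

theorem exists_involutive_swapping_of_isCompl_range {P V : Type*} {f g : P → V}
    (hf : Injective f) (hg : Injective g) (hfg : IsCompl (Set.range f) (Set.range g)) :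
    ∃ m : V → V, Involutive m ∧ (∀ v, m v ≠ v) ∧ ∀ p, m (f p) = g p := by
  have hne : ∀ p q, f p ≠ g q := fun p q => Set.disjoint_range_iff.1 hfg.1 p q
  have hsurj : Surjective (Sum.elim f g) := fun v => by
    obtain ⟨p, rfl⟩ | ⟨p, rfl⟩ := (codisjoint_iff.1 hfg.2).ge (Set.mem_univ v)
    exacts [⟨.inl p, rfl⟩, ⟨.inr p, rfl⟩]
  let e := Equiv.ofBijective _ ⟨hf.sumElim hg hne, hsurj⟩
  refine ⟨e ∘ Sum.swap ∘ e.symm, fun v => by simp, fun v hv => ?_, fun p => ?_⟩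
  · obtain ⟨p | p, rfl⟩ := e.surjective v <;> simp at hv
  · have hp : e.symm (f p) = .inl p := e.symm_apply_eq.2 rfl
    simp only [comp_apply, hp, Sum.swap_inl]
    rfl

section GradedMatching

variable {ι : ℤ → Type*} {R : ∀ i, Set (ι (i + 1))} (σ : ∀ i, R (i + 1) ≃ ↥(R i)ᶜ)

def upperVertex (p : Σ i, R (i + 1)) : Σ i, ι i := ⟨p.1 + 1 + 1, p.2⟩

def lowerVertex (p : Σ i, R (i + 1)) : Σ i, ι i := ⟨p.1 + 1, σ p.1 p.2⟩

theorem upperVertex_injective : Injective (upperVertex (R := R)) := by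
  rintro ⟨i, r⟩ ⟨j, r'⟩ h
  simp only [upperVertex, Sigma.mk.inj_iff, add_left_inj] at h
  obtain ⟨rfl, h⟩ := h
  simp [Subtype.ext (eq_of_heq h)]

theorem lowerVertex_injective : Injective (lowerVertex σ) := by
  rintro ⟨i, r⟩ ⟨j, r'⟩ h
  simp only [lowerVertex, Sigma.mk.inj_iff, add_left_inj] at h
  obtain ⟨rfl, h⟩ := h
  simp [(σ i).injective (Subtype.ext (eq_of_heq h))]

theorem isCompl_range_upperVertex_lowerVertex :
    IsCompl (Set.range (upperVertex (R := R))) (Set.range (lowerVertex σ)) := by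
  refine ⟨Set.disjoint_range_iff.2 ?_, codisjoint_iff.2 (Set.eq_univ_of_forall ?_)⟩
  · rintro ⟨i, r⟩ ⟨j, r'⟩ h
    simp only [upperVertex, lowerVertex, Sigma.mk.inj_iff] at h
    obtain ⟨hij, h⟩ := h
    obtain rfl : j = i + 1 := by omega
    exact (σ (i + 1) r').2 (eq_of_heq h ▸ r.2)
  · rintro ⟨k, x⟩
    obtain ⟨j, rfl⟩ : ∃ j, k = j + 1 := ⟨k - 1, by omega⟩
    by_cases hx : x ∈ R j
    · obtain ⟨i, rfl⟩ : ∃ i, j = i + 1 := ⟨j - 1, by omega⟩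
      exact .inl ⟨⟨i, x, hx⟩, rfl⟩
    · exact .inr ⟨⟨j, (σ j).symm ⟨x, hx⟩⟩, by simp [lowerVertex]⟩

end GradedMatching

theorem coefficient_graph_of_long_exact_sequence_has_perfect_matching_general
    (K : Type*) [Field K] (ι : ℤ → Type*) [∀ i, Fintype (ι i)]
    (δ : ∀ i : ℤ, (ι (i + 1) →₀ K) →ₗ[K] (ι i →₀ K))
    (hexact : ∀ i : ℤ, LinearMap.range (δ (i + 1)) = LinearMap.ker (δ i)) :
    ∃ m : (Σ i : ℤ, ι i) → (Σ i : ℤ, ι i),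
      Function.Involutive m ∧
        ∀ v, m v ≠ v ∧ (CoeffEdge K ι δ v (m v) ∨ CoeffEdge K ι δ (m v) v) := by
  choose R hR using fun i => exists_isCompl_ker_supported (δ i)
  choose σ hσ using fun i =>
    exists_equiv_compl_forall_apply_single_ne_zero (hexact i) (hR i) (hR (i + 1))
  have hcompl := isCompl_range_upperVertex_lowerVertex σ
  obtain ⟨m, hm, hm_ne, hm_upper⟩ := exists_involutive_swapping_of_isCompl_range
    upperVertex_injective (lowerVertex_injective σ) hcompl
  have hedge : ∀ p, CoeffEdge K ι δ (upperVertex p) (lowerVertex σ p) :=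
    fun p => ⟨rfl, hσ p.1 p.2⟩
  refine ⟨m, hm, fun v => ⟨hm_ne v, ?_⟩⟩
  obtain ⟨p, rfl⟩ | ⟨p, rfl⟩ := (codisjoint_iff.1 hcompl.2).ge (Set.mem_univ v)
  · exact .inl (by rw [hm_upper]; exact hedge p)
  · have hm_lower : m (lowerVertex σ p) = upperVertex p := by rw [← hm_upper, hm]
    exact .inr (by rw [hm_lower]; exact hedge p)

/-- Let `⋯ ← V_i ← V_{i+1} ← ⋯` be a bounded long exact sequence of
finite-dimensional vector spaces with fixed bases (modelled as `V i = ι i →₀ K` with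
the standard bases, `ι i` finite and empty outside a bounded range).  Then the
coefficient graph (vertex set `⊔_i ι i`, with an edge `v' ← v` for `v ∈ ι (i+1)`,
`v' ∈ ι i` whenever `δ i v` has nonzero `v'`-coefficient) admits a perfect matching:
an involution `m` without fixed points matching each vertex along an edge of the
graph. -/
theorem coefficient_graph_of_long_exact_sequence_has_perfect_matching
    (K : Type*) [Field K] (ι : ℤ → Type*) [∀ i, Fintype (ι i)]
    (N : ℤ) (hbdd : ∀ i : ℤ, N < |i| → IsEmpty (ι i))
    (δ : ∀ i : ℤ, (ι (i + 1) →₀ K) →ₗ[K] (ι i →₀ K))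
    (hexact : ∀ i : ℤ, LinearMap.range (δ (i + 1)) = LinearMap.ker (δ i)) :
    ∃ m : (Σ i : ℤ, ι i) → (Σ i : ℤ, ι i),
      Function.Involutive m ∧
        ∀ v, m v ≠ v ∧ (CoeffEdge K ι δ v (m v) ∨ CoeffEdge K ι δ (m v) v) :=
  coefficient_graph_of_long_exact_sequence_has_perfect_matching_general K ι δ hexact
end

section
/- In the ring of symmetric polynomials in k variables over ℚ, the ideal generated by the complete homogeneous symmetric polynomials h_{n-k+1}, h_{n-k+2}, …, h_n equals the ideal generated by all h_i with i > n-k. -/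
/-!
The power series `∏ᵢ (1 - Xᵢ t)` and `∏ᵢ (1 - Xᵢ t)⁻¹ = ∑ₘ hₘ tᵐ` are inverse to each other, so
`∑ⱼ (-1)ʲ eⱼ hₘ₋ⱼ = 0` for `m > 0`. As `eⱼ = 0` for `j > k`, this writes `hₘ` as a combination of
`hₘ₋₁, …, hₘ₋ₖ` with symmetric coefficients, and strong induction on `m` shows that
`h_{a+1}, …, h_{a+k}` generate every `hₘ` with `m > a`.
-/

open MvPolynomial

noncomputable def hSym (k d : ℕ) : symmetricSubalgebra (Fin k) ℚ :=
  ⟨hsymm (Fin k) ℚ d, (mem_symmetricSubalgebra _).2 (hsymm_isSymmetric _ _ d)⟩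

open Finset

theorem PowerSeries.one_sub_C_mul_X_mul_mk_pow {R : Type*} [CommRing R] (r : R) :
    (1 - C r * X) * mk (r ^ ·) = 1 := by
  simpa [rescale_mk, mul_comm] using congrArg (rescale r) (mk_one_mul_one_sub_eq_one (S := R))

namespace MvPolynomial

section CommSemiring

variable {σ R : Type*} [Fintype σ] [CommSemiring R]

theorem esymm_eq_zero_of_card_lt {n : ℕ} (h : Fintype.card σ < n) : esymm σ R n = 0 := by
  rw [esymm, powersetCard_eq_empty.2 (by rwa [card_univ]), sum_empty]

variable [DecidableEq σ]

theorem hsymm_eq_sum_finsuppAntidiag (d : ℕ) :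
    hsymm σ R d = ∑ l ∈ univ.finsuppAntidiag d, ∏ i, X i ^ l i := by
  let e : Sym σ d ≃ univ.finsuppAntidiag d := (Sym.equivNatSum σ d).trans
    (Equiv.subtypeEquivRight fun l => by simp [mem_finsuppAntidiag, Finsupp.sum_fintype])
  rw [hsymm, ← sum_coe_sort (univ.finsuppAntidiag d)]
  refine Fintype.sum_equiv e _ _ fun s => ?_
  rw [prod_multiset_map_count]
  exact prod_subset (subset_univ _) fun i _ hi => by
    rw [Multiset.count_eq_zero_of_notMem (mt Multiset.mem_toFinset.2 hi), pow_zero]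

theorem prod_mk_X_pow_eq_mk_hsymm :
    ∏ i : σ, PowerSeries.mk (X i ^ · : ℕ → MvPolynomial σ R) = PowerSeries.mk (hsymm σ R) := by
  ext d
  simp [PowerSeries.coeff_prod, hsymm_eq_sum_finsuppAntidiag]

end CommSemiring

variable {σ R : Type*} [Fintype σ] [CommRing R]

theorem coeff_prod_one_sub_C_X_mul_X (j : ℕ) :
    PowerSeries.coeff j (∏ i : σ, (1 - PowerSeries.C (X i : MvPolynomial σ R) * PowerSeries.X)) =
      (-1) ^ j * esymm σ R j := by
  simp_rw [sub_eq_add_neg, ← neg_mul, ← map_neg, prod_one_add, prod_mul_distrib]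
  simp_rw [prod_const, ← map_prod, map_sum, PowerSeries.coeff_C_mul_X_pow, prod_neg, esymm,
    powersetCard_eq_filter, sum_filter, mul_sum]
  refine sum_congr rfl fun t _ => ?_
  split_ifs <;> simp_all [eq_comm]

variable [DecidableEq σ]

theorem prod_one_sub_C_X_mul_X_mul_mk_hsymm :
    (∏ i : σ, (1 - PowerSeries.C (X i : MvPolynomial σ R) * PowerSeries.X)) *
      PowerSeries.mk (hsymm σ R) = 1 := by
  rw [← prod_mk_X_pow_eq_mk_hsymm, ← prod_mul_distrib]
  exact prod_eq_one fun i _ => PowerSeries.one_sub_C_mul_X_mul_mk_pow (X i)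

theorem sum_antidiagonal_esymm_mul_hsymm {m : ℕ} (hm : m ≠ 0) :
    ∑ p ∈ antidiagonal m, (-1) ^ p.1 * esymm σ R p.1 * hsymm σ R p.2 = 0 := by
  simpa [PowerSeries.coeff_mul, coeff_prod_one_sub_C_X_mul_X, hm] using
    congrArg (PowerSeries.coeff m) (prod_one_sub_C_X_mul_X_mul_mk_hsymm (σ := σ) (R := R))

theorem hsymm_eq_sum_esymm_mul_hsymm {m : ℕ} (hm : m ≠ 0) :
    hsymm σ R m = ∑ i ∈ range m, (-1) ^ i * esymm σ R (i + 1) * hsymm σ R (m - (i + 1)) := by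
  have h := sum_antidiagonal_esymm_mul_hsymm (σ := σ) (R := R) hm
  rw [Nat.sum_antidiagonal_eq_sum_range_succ (fun i j => (-1) ^ i * esymm σ R i * hsymm σ R j),
    sum_range_succ'] at h
  simp only [pow_succ, mul_neg_one, neg_mul, sum_neg_distrib, pow_zero, esymm_zero, one_mul,
    Nat.sub_zero] at h
  linear_combination h

end MvPolynomial

namespace MvPolynomial.symmetricSubalgebra

variable (σ R : Type*) [Fintype σ] [CommRing R]

noncomputable def esymm (n : ℕ) : symmetricSubalgebra σ R :=
  ⟨MvPolynomial.esymm σ R n, MvPolynomial.esymm_isSymmetric σ R n⟩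

noncomputable def hsymm [DecidableEq σ] (n : ℕ) : symmetricSubalgebra σ R :=
  ⟨MvPolynomial.hsymm σ R n, MvPolynomial.hsymm_isSymmetric σ R n⟩

variable {σ R} [DecidableEq σ]

theorem hsymm_mem_span_image_Ico {m : ℕ} (hm : m ≠ 0) :
    hsymm σ R m ∈ Ideal.span (hsymm σ R '' Set.Ico (m - Fintype.card σ) m) := by
  have hrec : hsymm σ R m =
      ∑ i ∈ range m, (-1) ^ i * esymm σ R (i + 1) * hsymm σ R (m - (i + 1)) :=
    Subtype.ext (by simpa [hsymm, esymm] using MvPolynomial.hsymm_eq_sum_esymm_mul_hsymm hm)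
  rw [hrec]
  refine Ideal.sum_mem _ fun i hi => ?_
  rw [mem_range] at hi
  by_cases hiσ : i < Fintype.card σ
  · exact Ideal.mul_mem_left _ _ (Ideal.subset_span ⟨_, ⟨by omega, by omega⟩, rfl⟩)
  · have he : esymm σ R (i + 1) = 0 := Subtype.ext (esymm_eq_zero_of_card_lt (by omega))
    simp [he]

theorem span_hsymm_Ioc_eq_span_hsymm_Ioi (a : ℕ) :
    Ideal.span (hsymm σ R '' Set.Ioc a (a + Fintype.card σ)) =
      Ideal.span (hsymm σ R '' Set.Ioi a) := by
  refine le_antisymm (Ideal.span_mono (Set.image_mono Set.Ioc_subset_Ioi_self)) ?_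
  rw [Ideal.span_le]
  rintro _ ⟨d, hd : a < d, rfl⟩
  induction d using Nat.strong_induction_on with
  | _ d ih =>
    by_cases hdσ : d ≤ a + Fintype.card σ
    · exact Ideal.subset_span ⟨d, ⟨hd, hdσ⟩, rfl⟩
    · refine Ideal.span_le.2 ?_ (hsymm_mem_span_image_Ico (by omega))
      rintro _ ⟨j, ⟨hj_ge, hj_lt⟩, rfl⟩
      exact ih j hj_lt (by omega)

end MvPolynomial.symmetricSubalgebra

theorem ideal_span_hsymm_range_eq_span_hsymm_gt_general
    (k n : ℕ) (hkn : k ≤ n) :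
    Ideal.span {x : symmetricSubalgebra (Fin k) ℚ |
        ∃ d : ℕ, n - k + 1 ≤ d ∧ d ≤ n ∧ x = hSym k d} =
      Ideal.span {x : symmetricSubalgebra (Fin k) ℚ |
        ∃ d : ℕ, n - k < d ∧ x = hSym k d} := by
  have h := symmetricSubalgebra.span_hsymm_Ioc_eq_span_hsymm_Ioi (σ := Fin k) (R := ℚ) (n - k)
  rw [Fintype.card_fin, Nat.sub_add_cancel hkn] at h
  have hSym_eq : hSym k = symmetricSubalgebra.hsymm (Fin k) ℚ := rfl
  convert h using 2 <;> ext x <;>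
    simp only [hSym_eq, Set.mem_ofPred_eq, Set.mem_image, Set.mem_Ioc, Set.mem_Ioi,
      Nat.add_one_le_iff, and_assoc, eq_comm (a := x)]

/-- In the ring of symmetric polynomials in `k` variables over `ℚ`
(`1 ≤ k ≤ n`), the ideal generated by the complete homogeneous symmetric polynomials
`h_{n−k+1}, …, h_n` equals the ideal generated by all `h_i` with `i > n − k`. -/
theorem ideal_span_hsymm_range_eq_span_hsymm_gt
    (k n : ℕ) (hk : 1 ≤ k) (hkn : k ≤ n) :
    Ideal.span {x : symmetricSubalgebra (Fin k) ℚ |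
        ∃ d : ℕ, n - k + 1 ≤ d ∧ d ≤ n ∧ x = hSym k d} =
      Ideal.span {x : symmetricSubalgebra (Fin k) ℚ |
        ∃ d : ℕ, n - k < d ∧ x = hSym k d} :=
  ideal_span_hsymm_range_eq_span_hsymm_gt_general k n hkn
end

section
/- Let λ and μ be partitions with μ ⊆ λ, both single rows: λ = (p) and μ = (s) with s ≤ p. Then the change-of-basis coefficient b_{λμ} defined by s_λ(1−t_1,…,1−t_k) = ∑_μ b_{λμ} s_μ(t_1,…,t_k) equals (−1)^s · C(k+p−1, k+s−1), i.e., h_p(1−t) = ∑_{s=0}^{p} (−1)^s C(k+p−1, k+s−1) h_s(t). -/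
/-!
Expanding `h_p` into the monomials of degree `p` and each `(1 + y i) ^ α i` by the binomial
theorem, the coefficient of `y ^ β` in `h_p(1 + y)` is `∑_{|α| = p} ∏ i, C(α i, β i)`. This is
the coefficient of `z ^ p` in `∏ i, z ^ β i / (1 - z) ^ (β i + 1) = z ^ |β| / (1 - z) ^ (|β| + k)`,
namely `C(k + p - 1, k + |β| - 1)`. Hence `h_p(1 + y) = ∑ s, C(k + p - 1, k + s - 1) h_s(y)`,
and substituting `y = -t` produces the sign `(-1) ^ s` by homogeneity of `h_s`.
-/

open Finset Fintype PowerSeries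

namespace PowerSeries
variable (R : Type*) [CommRing R]

theorem coeff_X_pow_mul_invOneSubPow (m c n : ℕ) :
    coeff n ((X : R⟦X⟧) ^ m * (invOneSubPow R (m + c + 1)).val) = (n + c).choose (m + c) := by
  rw [coeff_X_pow_mul', invOneSubPow_val_succ_eq_mk_add_choose, coeff_mk]
  split_ifs with h
  · congr 2; omega
  · rw [Nat.choose_eq_zero_of_lt (by omega), Nat.cast_zero]

theorem coeff_X_pow_mul_invOneSubPow_succ (m n : ℕ) :
    coeff n ((X : R⟦X⟧) ^ m * (invOneSubPow R (m + 1)).val) = n.choose m :=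
  coeff_X_pow_mul_invOneSubPow R m 0 n

theorem prod_invOneSubPow {ι : Type*} (s : Finset ι) (d : ι → ℕ) :
    ∏ i ∈ s, invOneSubPow R (d i) = invOneSubPow R (∑ i ∈ s, d i) := by
  classical
  induction s using Finset.induction_on with
  | empty => simp [invOneSubPow_zero]
  | insert a s ha ih => rw [prod_insert ha, sum_insert ha, ih, invOneSubPow_add]

end PowerSeries

theorem Finset.sum_finsuppAntidiag_eq_sum_piAntidiag {ι μ M : Type*} [DecidableEq ι]
    [AddCommMonoid μ] [HasAntidiagonal μ] [DecidableEq μ] [AddCommMonoid M]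
    (s : Finset ι) (n : μ) (F : (ι → μ) → M) :
    ∑ l ∈ s.finsuppAntidiag n, F l = ∑ f ∈ s.piAntidiag n, F f := by
  rw [finsuppAntidiag, sum_map]
  exact sum_attach (s.piAntidiag n) F

theorem Finset.sum_piAntidiag_prod_choose {ι : Type*} [DecidableEq ι] {s : Finset ι}
    (hs : s.Nonempty) (β : ι → ℕ) (n : ℕ) :
    ∑ α ∈ s.piAntidiag n, ∏ i ∈ s, (α i).choose (β i) =
      (#s + n - 1).choose (#s + ∑ i ∈ s, β i - 1) := by
  obtain ⟨c, hc⟩ : ∃ c, #s = c + 1 := ⟨#s - 1, by have := hs.card_pos; omega⟩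
  rw [hc, show c + 1 + n - 1 = n + c by omega,
    show c + 1 + ∑ i ∈ s, β i - 1 = ∑ i ∈ s, β i + c by omega]
  apply Nat.cast_injective (R := ℤ)
  push_cast
  calc ∑ α ∈ s.piAntidiag n, ∏ i ∈ s, ((α i).choose (β i) : ℤ)
      = coeff n (∏ i ∈ s, (X : ℤ⟦X⟧) ^ β i * (invOneSubPow ℤ (β i + 1)).val) := by
        simp only [coeff_prod, coeff_X_pow_mul_invOneSubPow_succ]
        exact (sum_finsuppAntidiag_eq_sum_piAntidiag s n _).symm
    _ = coeff n (X ^ (∑ i ∈ s, β i) * (invOneSubPow ℤ (∑ i ∈ s, β i + c + 1)).val) := by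
        rw [prod_mul_distrib, prod_pow_eq_pow_sum, ← Units.coe_prod, prod_invOneSubPow,
          sum_add_distrib, sum_const, hc, smul_eq_mul, mul_one, add_assoc]
    _ = ((n + c).choose (∑ i ∈ s, β i + c) : ℤ) := coeff_X_pow_mul_invOneSubPow ℤ _ c n

theorem one_add_pow_eq_sum_range {A : Type*} [CommSemiring A] (y : A) {a N : ℕ} (h : a ≤ N) :
    (1 + y) ^ a = ∑ b ∈ range (N + 1), (a.choose b : A) * y ^ b := by
  rw [add_comm, add_pow]
  refine sum_subset (range_subset_range.2 (by omega)) (fun b _ hb => ?_) |>.trans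
    (sum_congr rfl fun b _ => by rw [one_pow, mul_one, mul_comm])
  rw [Nat.choose_eq_zero_of_lt (by simpa using hb), Nat.cast_zero, mul_zero]

theorem Finset.sum_piFinset_range_eq_sum_range_sum_piAntidiag {ι M : Type*} [Fintype ι]
    [DecidableEq ι] [AddCommMonoid M] {n : ℕ} {f : (ι → ℕ) → M}
    (hf : ∀ β, n < ∑ i, β i → f β = 0) :
    ∑ β ∈ piFinset fun _ => range (n + 1), f β =
      ∑ s ∈ range (n + 1), ∑ β ∈ univ.piAntidiag s, f β := by
  set box := piFinset fun _ : ι => range (n + 1)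
  have hfiber : ∀ s ∈ range (n + 1),
      {β ∈ box | ∑ i, β i ≤ n ∧ ∑ i, β i = s} = univ.piAntidiag s := by
    intro s hs
    ext β
    have hle : ∀ i, β i ≤ ∑ j, β j := fun i => single_le_sum (by simp) (mem_univ i)
    have hsum : univ.sum β = ∑ j, β j := rfl
    simp only [mem_filter, mem_piAntidiag, box, mem_piFinset, mem_range, mem_univ, ne_eq,
      implies_true, and_true]
    simp only [mem_range] at hs
    exact ⟨fun h => h.2.2, fun h => ⟨fun i => by have := hle i; omega, by omega, h⟩⟩
  calc ∑ β ∈ box, f β = ∑ β ∈ box with ∑ i, β i ≤ n, f β :=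
        (sum_filter_of_ne fun β _ h => not_lt.1 (mt (hf β) h)).symm
    _ = ∑ s ∈ range (n + 1), ∑ β ∈ box with ∑ i, β i ≤ n ∧ ∑ i, β i = s, f β := by
        simp only [← filter_filter]
        exact (sum_fiberwise_of_maps_to
          (fun β hβ => mem_range_succ_iff.2 (mem_filter.1 hβ).2) f).symm
    _ = ∑ s ∈ range (n + 1), ∑ β ∈ univ.piAntidiag s, f β :=
        Finset.sum_congr rfl fun s hs => by rw [hfiber s hs]

theorem sum_piAntidiag_prod_one_add_pow {ι A : Type*} [Fintype ι] [Nonempty ι] [DecidableEq ι]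
    [CommSemiring A] (y : ι → A) (n : ℕ) :
    ∑ α ∈ univ.piAntidiag n, ∏ i, (1 + y i) ^ α i =
      ∑ β ∈ piFinset fun _ => range (n + 1),
        ((card ι + n - 1).choose (card ι + ∑ i, β i - 1) : A) * ∏ i, y i ^ β i := by
  have hexpand : ∀ α ∈ univ.piAntidiag n, ∏ i, (1 + y i) ^ α i =
      ∑ β ∈ piFinset fun _ => range (n + 1), ∏ i, ((α i).choose (β i) : A) * y i ^ β i := by
    intro α hα
    have hle : ∀ i, α i ≤ n := fun i =>
      (mem_piAntidiag.1 hα).1 ▸ single_le_sum (by simp) (mem_univ i)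
    rw [← prod_univ_sum (fun _ => range (n + 1)) fun i b => ((α i).choose b : A) * y i ^ b]
    exact prod_congr rfl fun i _ => one_add_pow_eq_sum_range (y i) (hle i)
  rw [Finset.sum_congr rfl hexpand, sum_comm]
  refine Finset.sum_congr rfl fun β _ => ?_
  simp_rw [prod_mul_distrib, ← sum_mul, ← Nat.cast_prod, ← Nat.cast_sum]
  rw [sum_piAntidiag_prod_choose univ_nonempty, card_univ]

namespace MvPolynomial
variable {σ R A : Type*} [Fintype σ] [DecidableEq σ] [CommSemiring R]

theorem aeval_hsymm [CommSemiring A] [Algebra R A] (y : σ → A) (n : ℕ) :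
    aeval y (hsymm σ R n) = ∑ f ∈ univ.piAntidiag n, ∏ i, y i ^ f i := by
  simp only [hsymm, map_sum, map_multiset_prod, Multiset.map_map, Function.comp_def, aeval_X]
  rw [← map_sym_eq_piAntidiag univ n, sum_map, sym_univ]
  refine Finset.sum_congr rfl fun m _ => ?_
  refine (prod_multiset_map_count _ y).trans (prod_subset (subset_univ _) fun i _ hi => ?_)
  rw [Multiset.count_eq_zero_of_notMem (by simpa using hi), pow_zero]

theorem aeval_one_add_hsymm [Nonempty σ] [CommSemiring A] [Algebra R A] (y : σ → A) (n : ℕ) :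
    aeval (fun i => 1 + y i) (hsymm σ R n) =
      ∑ s ∈ range (n + 1),
        ((card σ + n - 1).choose (card σ + s - 1) : A) * aeval y (hsymm σ R s) := by
  have hσ := Fintype.card_pos (α := σ)
  rw [aeval_hsymm, sum_piAntidiag_prod_one_add_pow,
    sum_piFinset_range_eq_sum_range_sum_piAntidiag fun β hβ => by
      rw [Nat.choose_eq_zero_of_lt (by omega), Nat.cast_zero, zero_mul]]
  refine Finset.sum_congr rfl fun s _ => ?_
  rw [aeval_hsymm, mul_sum]
  exact Finset.sum_congr rfl fun β hβ => by rw [(mem_piAntidiag.1 hβ).1]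

theorem aeval_neg_hsymm [CommRing A] [Algebra R A] (y : σ → A) (n : ℕ) :
    aeval (fun i => -y i) (hsymm σ R n) = (-1) ^ n * aeval y (hsymm σ R n) := by
  rw [aeval_hsymm, aeval_hsymm, mul_sum]
  refine Finset.sum_congr rfl fun f hf => ?_
  simp_rw [neg_pow (y _), prod_mul_distrib, prod_pow_eq_pow_sum, (mem_piAntidiag.1 hf).1]

end MvPolynomial

open MvPolynomial

/-- For single-row partitions, the change of basis `t ↦ 1 − t` on
complete homogeneous symmetric polynomials in `k` variables is given by
`h_p(1−t) = ∑_{s=0}^{p} (−1)^s C(k+p−1, k+s−1) h_s(t)`. -/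
theorem hsymm_one_sub_eq_alternating_binomial_sum
    (k p : ℕ) (hk : 1 ≤ k) :
    aeval (fun i : Fin k => (1 : MvPolynomial (Fin k) ℚ) - X i) (hsymm (Fin k) ℚ p) =
      ∑ s ∈ Finset.range (p + 1),
        ((-1 : ℚ) ^ s * ((k + p - 1).choose (k + s - 1) : ℚ)) • hsymm (Fin k) ℚ s := by
  have : Nonempty (Fin k) := ⟨⟨0, hk⟩⟩
  simp_rw [sub_eq_add_neg]
  rw [aeval_one_add_hsymm, Fintype.card_fin]
  refine Finset.sum_congr rfl fun s _ => ?_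
  rw [aeval_neg_hsymm, aeval_X_left_apply, Algebra.smul_def]
  simp only [map_mul, map_pow, map_neg, map_one, map_natCast]
  ring
end

section
/- Let R = ℂ[x_{ij} : 1 ≤ i,j ≤ k] and let F_• : 0 → F_N → ⋯ → F_0 → 0 be a bounded complex of free R-modules with a chosen homogeneous basis, such that each basis element carries a label λ from a poset P, each differential sends a basis element labeled λ into the R-span of basis elements with strictly smaller labels, and such that F_• ⊗_R Frac(R) is exact. Then the graph with one vertex per basis element and an edge from each basis element x of F_{i+1} to each basis element y of F_i whenever label(y) < label(x) has a perfect matching. -/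
/-- The coordinate ring `R = ℂ[x_{ij} : 1 ≤ i,j ≤ k]` of `k × k` matrices. -/
abbrev SqRing (k : ℕ) := MvPolynomial (Fin k × Fin k) ℂ

/-- Given a complex of based free `R`-modules `F i = ι i →₀ R` with differentials
`d i : F (i+1) →ₗ[R] F i`, the induced `Frac(R)`-linear map
`F_{i+1} ⊗ Frac(R) → F_i ⊗ Frac(R)`, via the matrix of `d i` in the chosen bases. -/
noncomputable def fracMap (k : ℕ) (ι : ℕ → Type) [∀ i, Fintype (ι i)]
    (d : ∀ i : ℕ, (ι (i + 1) →₀ SqRing k) →ₗ[SqRing k] (ι i →₀ SqRing k)) (i : ℕ) :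
    (ι (i + 1) → FractionRing (SqRing k)) →ₗ[FractionRing (SqRing k)]
      (ι i → FractionRing (SqRing k)) :=
  Matrix.mulVecLin (Matrix.of fun y x =>
    algebraMap (SqRing k) (FractionRing (SqRing k)) ((d i (Finsupp.single x 1)) y))

/-!
Over the field `Frac(R)` the matching is built degree by degree. Carry a set `U i` of basis
elements of `F_i` whose rows in the matrix of `d_i` form a basis of its row space (for `i = 0`
all of them, by surjectivity). Some set `S i` of columns then gives an invertible square block,
and a nonzero term of the Leibniz expansion of its determinant matches `U i` with `S i` along
nonzero entries. By exactness the complement of `S i` is again such a set of rows for `d_{i+1}`,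
and every basis element lies in exactly one `U i` or `S (i - 1)`. A nonzero entry over `Frac(R)`
is a nonzero entry of `d`, so by the filtration hypothesis it raises the label.
-/

section

open Function Set
open scoped Classical

namespace Matrix

variable {K : Type*} [Field K] {l m n : Type*} [Fintype n]

theorem exists_perm_apply_ne_zero_of_det_ne_zero {R : Type*} [CommRing R] [DecidableEq n]
    {A : Matrix n n R} (h : A.det ≠ 0) : ∃ σ : Equiv.Perm n, ∀ i, A (σ i) i ≠ 0 := by
  contrapose! h
  rw [det_apply]
  refine Finset.sum_eq_zero fun σ _ => ?_
  obtain ⟨i, hi⟩ := h σ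
  rw [Finset.prod_eq_zero (f := fun j => A (σ j) j) (Finset.mem_univ i) hi, smul_zero]

theorem exists_equiv_apply_ne_zero_of_bijective [Fintype m] [DecidableEq m] (A : Matrix m n K)
    (hA : Bijective A.mulVec) : ∃ e : m ≃ n, ∀ i, A i (e i) ≠ 0 := by
  have hcard : Fintype.card n = Fintype.card m := by
    simpa using (LinearEquiv.ofBijective A.mulVecLin hA).finrank_eq
  let e₀ : m ≃ n := (Fintype.equivOfCardEq hcard).symm
  have hdet : (A.submatrix id e₀).det ≠ 0 := by
    refine ((isUnit_iff_isUnit_det _).mp (mulVec_injective_iff_isUnit.mp fun v w h => ?_)).ne_zero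
    simp only [submatrix_mulVec_equiv, Function.comp_id] at h
    exact e₀.symm.surjective.injective_comp_right (hA.1 h)
  obtain ⟨σ, hσ⟩ := exists_perm_apply_ne_zero_of_det_ne_zero hdet
  exact ⟨σ.symm.trans e₀, fun i => by simpa using hσ (σ.symm i)⟩

theorem exists_bijective_submatrix_of_surjective (B : Matrix m n K) (hB : Surjective B.mulVec) :
    ∃ S : Set n, Bijective (B.submatrix id ((↑) : S → n)).mulVec := by
  obtain ⟨S, -, -, hspan, hli⟩ :=
    exists_linearIndepOn_extension (linearIndepOn_empty K B.col) (empty_subset univ)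
  refine ⟨S, mulVec_injective_iff.mpr hli, ?_⟩
  have hrange : LinearMap.range B.mulVecLin = ⊤ := LinearMap.range_eq_top.mpr hB
  rw [← coe_mulVecLin, ← LinearMap.range_eq_top, range_mulVecLin, eq_top_iff, ← hrange,
    range_mulVecLin, Submodule.span_le]
  rintro _ ⟨x, rfl⟩
  have hx := hspan (mem_image_of_mem B.col (mem_univ x))
  rw [image_eq_range] at hx
  exact hx

theorem submatrix_mulVec_of_forall_notMem_eq_zero {R : Type*} [Semiring R] (A : Matrix m n R)
    (r : l → m) {S : Set n} {u : n → R} (hu : ∀ x ∉ S, u x = 0) :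
    A.submatrix r ((↑) : S → n) *ᵥ (u ∘ (↑)) = (A *ᵥ u) ∘ r := by
  funext y
  simp only [Function.comp_apply, mulVec, dotProduct, submatrix_apply]
  have hzero : ∑ x : {x // x ∉ S}, A (r y) x * u x = 0 :=
    Finset.sum_eq_zero fun x _ => by rw [hu x x.2, mul_zero]
  rw [← Fintype.sum_subtype_add_sum_subtype (· ∈ S), hzero, add_zero]

variable {α β γ : Type*} [Fintype α] [Fintype γ]

/-- The rows of `A` indexed by `U` form a basis of the row space of `A`, stated as: the row
submatrix has the kernel of `A` and is surjective. -/
structure IsRowBasis (A : Matrix β α K) (U : Set β) : Prop where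
  mulVec_eq_zero : ∀ v, A.submatrix ((↑) : U → β) id *ᵥ v = 0 → A *ᵥ v = 0
  surjective : Surjective (A.submatrix ((↑) : U → β) id).mulVec

theorem isRowBasis_univ {A : Matrix β α K} (hA : Surjective A.mulVec) : A.IsRowBasis univ where
  mulVec_eq_zero v hv := funext fun y => congrFun hv ⟨y, mem_univ y⟩
  surjective w := by
    obtain ⟨v, hv⟩ := hA fun y => w ⟨y, mem_univ y⟩
    exact ⟨v, funext fun y => congrFun hv y⟩

noncomputable def IsRowBasis.pivotCols {A : Matrix β α K} {U : Set β} (hU : A.IsRowBasis U) :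
    Set α :=
  (exists_bijective_submatrix_of_surjective _ hU.surjective).choose

theorem IsRowBasis.bijective_pivotCols {A : Matrix β α K} {U : Set β} (hU : A.IsRowBasis U) :
    Bijective (A.submatrix ((↑) : U → β) ((↑) : hU.pivotCols → α)).mulVec :=
  (exists_bijective_submatrix_of_surjective _ hU.surjective).choose_spec

theorem IsRowBasis.compl {A : Matrix β α K} {A' : Matrix α γ K} {U : Set β} {S : Set α}
    (hU : A.IsRowBasis U) (hexact : LinearMap.range A'.mulVecLin = LinearMap.ker A.mulVecLin)
    (hS : Bijective (A.submatrix ((↑) : U → β) ((↑) : S → α)).mulVec) : A'.IsRowBasis Sᶜ where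
  mulVec_eq_zero v hv := by
    have hAu : A *ᵥ (A' *ᵥ v) = 0 := by
      change A' *ᵥ v ∈ LinearMap.ker A.mulVecLin
      exact hexact ▸ ⟨v, rfl⟩
    have hsupp : ∀ x ∉ S, (A' *ᵥ v) x = 0 := fun x hx => congrFun hv ⟨x, hx⟩
    have hS0 : (A' *ᵥ v) ∘ ((↑) : S → α) = 0 := hS.1 <| by
      rw [submatrix_mulVec_of_forall_notMem_eq_zero _ _ hsupp, hAu, mulVec_zero]; rfl
    funext x
    by_cases hx : x ∈ S
    · exact congrFun hS0 ⟨x, hx⟩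
    · exact hsupp x hx
  surjective w := by
    -- extend `w` by zero and subtract the vector on `S` with the same rows `U`; the difference
    -- lies in `ker A = range A'`
    let wt : α → K := fun x => if h : x ∈ S then 0 else w ⟨x, h⟩
    obtain ⟨c, hc⟩ := hS.2 ((A *ᵥ wt) ∘ (↑))
    let ct : α → K := fun x => if h : x ∈ S then c ⟨x, h⟩ else 0
    have hct : A.submatrix ((↑) : U → β) ((↑) : S → α) *ᵥ c = (A *ᵥ ct) ∘ (↑) := by
      rw [← submatrix_mulVec_of_forall_notMem_eq_zero _ _ (u := ct) fun x hx => dif_neg hx]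
      congr 1
      funext x
      simp [ct]
    obtain ⟨v, hv⟩ : wt - ct ∈ LinearMap.range A'.mulVecLin := by
      rw [hexact, LinearMap.mem_ker, mulVecLin_apply]
      refine hU.mulVec_eq_zero _ ?_
      rw [mulVec_sub]
      funext y
      exact sub_eq_zero.mpr (congrFun (hc.symm.trans hct) y)
    refine ⟨v, funext fun x => ?_⟩
    change (A' *ᵥ v) x = w x
    rw [mulVecLin_apply] at hv
    have hx : (x : α) ∉ S := x.2
    simp [hv, wt, ct, hx]

end Matrix

variable {ι : ℕ → Type*}

inductive GradedAdj (E : ∀ i, ι i → ι (i + 1) → Prop) : (Σ i, ι i) → (Σ i, ι i) → Prop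
  | mk {i : ℕ} {y : ι i} {x : ι (i + 1)} : E i y x → GradedAdj E ⟨i, y⟩ ⟨i + 1, x⟩

namespace GradedAdj

variable {E E' : ∀ i, ι i → ι (i + 1) → Prop} {a b : Σ i, ι i}

theorem ne (h : GradedAdj E a b) : a ≠ b := by
  rintro rfl
  cases h

theorem mono (hE : ∀ i y x, E i y x → E' i y x) (h : GradedAdj E a b) : GradedAdj E' a b := by
  cases h with
  | mk h => exact mk (hE _ _ _ h)

theorem fst_add_one_and_lt {P : Type*} [LT P] {lab : ∀ i, ι i → P}
    (h : GradedAdj (fun i y x => lab i y < lab (i + 1) x) a b) :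
    a.1 + 1 = b.1 ∧ lab a.1 a.2 < lab b.1 b.2 := by
  cases h with
  | mk h => exact ⟨rfl, h⟩

end GradedAdj

structure GradedPairing (ι : ℕ → Type*) where
  up : ∀ i, Set (ι i)
  down : ∀ i, Set (ι (i + 1))
  up_zero : up 0 = univ
  up_succ : ∀ i, up (i + 1) = (down i)ᶜ
  equiv : ∀ i, up i ≃ down i

namespace GradedPairing

variable (p : GradedPairing ι)

noncomputable def toFun : (Σ i, ι i) → Σ i, ι i
  | ⟨0, y⟩ => ⟨1, p.equiv 0 ⟨y, p.up_zero ▸ mem_univ y⟩⟩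
  | ⟨i + 1, x⟩ =>
    if h : x ∈ p.down i then ⟨i, (p.equiv i).symm ⟨x, h⟩⟩
    else ⟨i + 2, p.equiv (i + 1) ⟨x, (p.up_succ i).symm ▸ h⟩⟩

theorem toFun_up (i : ℕ) (y : p.up i) : p.toFun ⟨i, y⟩ = ⟨i + 1, p.equiv i y⟩ := by
  cases i with
  | zero => rfl
  | succ i =>
    have hy : (y : ι (i + 1)) ∉ p.down i := by simpa [p.up_succ] using y.2
    simp [toFun, hy]

theorem toFun_down (i : ℕ) (y : p.up i) : p.toFun ⟨i + 1, p.equiv i y⟩ = ⟨i, y⟩ := by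
  simp [toFun, (p.equiv i y).2]

theorem exists_up_or_down (v : Σ i, ι i) :
    (∃ i, ∃ y : p.up i, v = ⟨i, y⟩) ∨ ∃ i, ∃ y : p.up i, v = ⟨i + 1, p.equiv i y⟩ := by
  obtain ⟨_ | i, x⟩ := v
  · exact Or.inl ⟨0, ⟨x, p.up_zero ▸ mem_univ x⟩, rfl⟩
  · by_cases hx : x ∈ p.down i
    · exact Or.inr ⟨i, (p.equiv i).symm ⟨x, hx⟩, by simp⟩
    · exact Or.inl ⟨i + 1, ⟨x, (p.up_succ i).symm ▸ hx⟩, rfl⟩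

theorem involutive_toFun : Involutive p.toFun := fun v => by
  obtain ⟨i, y, rfl⟩ | ⟨i, y, rfl⟩ := p.exists_up_or_down v
  · rw [toFun_up, toFun_down]
  · rw [toFun_down, toFun_up]

theorem adj_toFun {E : ∀ i, ι i → ι (i + 1) → Prop} (hE : ∀ i (y : p.up i), E i y (p.equiv i y))
    (v : Σ i, ι i) : (SimpleGraph.fromRel (GradedAdj E)).Adj v (p.toFun v) := by
  obtain ⟨i, y, rfl⟩ | ⟨i, y, rfl⟩ := p.exists_up_or_down v
  · rw [toFun_up]
    exact ⟨(GradedAdj.mk (hE i y)).ne, Or.inl (.mk (hE i y))⟩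
  · rw [toFun_down]
    exact ⟨(GradedAdj.mk (hE i y)).ne.symm, Or.inr (.mk (hE i y))⟩

end GradedPairing

section Exact

variable {K : Type*} [Field K] [∀ i, Fintype (ι i)] (A : ∀ i, Matrix (ι i) (ι (i + 1)) K)

noncomputable def rowBases (hsurj : Surjective (A 0).mulVec)
    (hexact : ∀ i, LinearMap.range (A (i + 1)).mulVecLin = LinearMap.ker (A i).mulVecLin) :
    ∀ i, {U : Set (ι i) // (A i).IsRowBasis U}
  | 0 => ⟨univ, Matrix.isRowBasis_univ hsurj⟩
  | i + 1 => ⟨(rowBases hsurj hexact i).2.pivotColsᶜ,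
      (rowBases hsurj hexact i).2.compl (hexact i) (rowBases hsurj hexact i).2.bijective_pivotCols⟩

theorem exists_involutive_adj_of_exact (hsurj : Surjective (A 0).mulVec)
    (hexact : ∀ i, LinearMap.range (A (i + 1)).mulVecLin = LinearMap.ker (A i).mulVecLin) :
    ∃ m : (Σ i, ι i) → Σ i, ι i, Involutive m ∧
      ∀ v, (SimpleGraph.fromRel (GradedAdj fun i y x => A i y x ≠ 0)).Adj v (m v) := by
  choose e he using fun i => Matrix.exists_equiv_apply_ne_zero_of_bijective _
    (rowBases A hsurj hexact i).2.bijective_pivotCols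
  let p : GradedPairing ι :=
    ⟨fun i => (rowBases A hsurj hexact i).1, fun i => (rowBases A hsurj hexact i).2.pivotCols,
      rfl, fun i => rfl, e⟩
  exact ⟨p.toFun, p.involutive_toFun, p.adj_toFun he⟩

end Exact

end

theorem labeled_complex_exact_after_fraction_field_has_matching_general
    (k : ℕ) (P : Type*) [PartialOrder P]
    (ι : ℕ → Type) [∀ i, Fintype (ι i)]
    (lab : ∀ i : ℕ, ι i → P)
    (d : ∀ i : ℕ, (ι (i + 1) →₀ SqRing k) →ₗ[SqRing k] (ι i →₀ SqRing k))
    (hfilt : ∀ (i : ℕ) (x : ι (i + 1)) (y : ι i),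
      (d i (Finsupp.single x 1)) y ≠ 0 → lab i y < lab (i + 1) x)
    (hsurj : LinearMap.range (fracMap k ι d 0) = ⊤)
    (hexact : ∀ i : ℕ,
      LinearMap.range (fracMap k ι d (i + 1)) = LinearMap.ker (fracMap k ι d i)) :
    ∃ m : (Σ i : ℕ, ι i) → (Σ i : ℕ, ι i),
      Function.Involutive m ∧ ∀ v, m v ≠ v ∧
        (((m v).1 + 1 = v.1 ∧ lab (m v).1 (m v).2 < lab v.1 v.2) ∨
          (v.1 + 1 = (m v).1 ∧ lab v.1 v.2 < lab (m v).1 (m v).2)) := by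
  let A i : Matrix (ι i) (ι (i + 1)) (FractionRing (SqRing k)) :=
    Matrix.of fun y x => algebraMap _ _ (d i (Finsupp.single x 1) y)
  obtain ⟨m, hm, hadj⟩ :=
    exists_involutive_adj_of_exact A (LinearMap.range_eq_top.mp hsurj) hexact
  have hlab {a b : Σ i, ι i} (h : GradedAdj (fun i y x => A i y x ≠ 0) a b) :
      a.1 + 1 = b.1 ∧ lab a.1 a.2 < lab b.1 b.2 :=
    (h.mono fun i y x hA => hfilt i x y fun h0 => hA (by simp [A, h0])).fst_add_one_and_lt
  exact ⟨m, hm, fun v => ⟨(hadj v).1.symm, (hadj v).2.symm.imp hlab hlab⟩⟩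

/-- Let `R = ℂ[x_{ij} : 1 ≤ i,j ≤ k]` and let
`F_• : 0 → F_N → ⋯ → F_0 → 0` be a bounded complex of free `R`-modules with chosen
bases, each basis element carrying a label from a poset `P`, such that each
differential sends a basis element labeled `λ` into the `R`-span of basis elements
with strictly smaller labels, and such that `F_• ⊗_R Frac(R)` is exact.  Then the
graph with one vertex per basis element and an edge from each basis element `x` of
`F_{i+1}` to each basis element `y` of `F_i` whenever `label(y) < label(x)` has a
perfect matching. -/
theorem labeled_complex_exact_after_fraction_field_has_matching
    (k : ℕ) (P : Type*) [PartialOrder P]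
    (ι : ℕ → Type) [∀ i, Fintype (ι i)]
    (N : ℕ) (hbdd : ∀ i : ℕ, N < i → IsEmpty (ι i))
    (lab : ∀ i : ℕ, ι i → P)
    (d : ∀ i : ℕ, (ι (i + 1) →₀ SqRing k) →ₗ[SqRing k] (ι i →₀ SqRing k))
    (hfilt : ∀ (i : ℕ) (x : ι (i + 1)) (y : ι i),
      (d i (Finsupp.single x 1)) y ≠ 0 → lab i y < lab (i + 1) x)
    (hsurj : LinearMap.range (fracMap k ι d 0) = ⊤)
    (hexact : ∀ i : ℕ,
      LinearMap.range (fracMap k ι d (i + 1)) = LinearMap.ker (fracMap k ι d i)) :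
    ∃ m : (Σ i : ℕ, ι i) → (Σ i : ℕ, ι i),
      Function.Involutive m ∧ ∀ v, m v ≠ v ∧
        (((m v).1 + 1 = v.1 ∧ lab (m v).1 (m v).2 < lab v.1 v.2) ∨
          (v.1 + 1 = (m v).1 ∧ lab v.1 v.2 < lab (m v).1 (m v).2)) :=
  labeled_complex_exact_after_fraction_field_has_matching_general k P ι lab d hfilt hsurj hexact
end

section
/- Let k = n and consider rank Betti tables β̃ = (β̃_{i,λ}) indexed by i ∈ ℤ and λ in the poset Y± of weakly decreasing integer sequences of length k, with nonnegative integer entries and finite support. If β̃ is a finite positive integer combination of homologically shifted pure tables β̃(i; λ ⊊ μ) (the table with entry 1 in positions (i,λ) and (i+1,μ) and 0 elsewhere), then β̃ satisfies: (a) ∑_{i,λ} (−1)^i β̃_{i,λ} = 0, and (b) for every choice of convex subsets S_i ⊆ Y± for each odd i, the inequality ∑_{i even} ∑_{λ ∈ Γ_i} β̃_{i,λ} ≥ ∑_{i odd} ∑_{λ ∈ S_i} β̃_{i,λ}, where Γ_i = {λ : μ ⊊ λ for some μ ∈ S_{i−1}} ∪ {λ : λ ⊊ μ for some μ ∈ S_{i+1}}.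 -/
open scoped Classical

/-- Weakly decreasing integer sequences of length `k` (the extended Young's lattice
`Y±`), ordered componentwise. -/
abbrev WDSeq (k : ℕ) := {l : Fin k → ℤ // Antitone l}

/-- The homologically shifted pure table `β̃(i; λ ⊊ μ)`: entry `1` in positions
`(i, λ)` and `(i+1, μ)`, and `0` elsewhere. -/
noncomputable def pureTable (k : ℕ) (i : ℤ) (l m : WDSeq k) : (ℤ × WDSeq k) →₀ ℕ :=
  Finsupp.single (i, l) 1 + Finsupp.single (i + 1, m) 1

/-!
Both sides of (a) and of (b) are `ℕ`-linear functions of the table `β̃`, so it suffices to check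
them on a single pure table `β̃(i; λ ⊊ μ)`. There the alternating sum is `(-1)^i + (-1)^(i+1) = 0`.
For (b), at most one of `i`, `i + 1` is odd, so the table contributes at most `1` to the left
side; when it does, `λ ∈ S_i` with `i` odd puts `μ ⊋ λ` into `Γ_{i+1}`, and `μ ∈ S_{i+1}` with
`i + 1` odd puts `λ ⊊ μ` into `Γ_i`, so it contributes at least `1` to the right side.
-/

open Finsupp

section LinearExtension

variable {ι N M F : Type*} [AddCommMonoid N] [AddCommMonoid M] [FunLike F N M]
  [AddMonoidHomClass F N M]

theorem map_finsuppSum_nsmul_eq_zero (L : F) (c : ι →₀ ℕ) (g : ι → N)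
    (h : ∀ t ∈ c.support, L (g t) = 0) : L (c.sum fun t m => m • g t) = 0 := by
  rw [map_finsuppSum]
  exact Finset.sum_eq_zero fun t ht => by simp only [map_nsmul, h t ht, smul_zero]

theorem map_finsuppSum_nsmul_le [PartialOrder M] [IsOrderedAddMonoid M] (L R : F)
    (c : ι →₀ ℕ) (g : ι → N) (h : ∀ t ∈ c.support, L (g t) ≤ R (g t)) :
    L (c.sum fun t m => m • g t) ≤ R (c.sum fun t m => m • g t) := by
  rw [map_finsuppSum, map_finsuppSum]
  exact Finset.sum_le_sum fun t ht => by
    simpa only [map_nsmul] using nsmul_le_nsmul_right (h t ht) (c t)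

end LinearExtension

section WeightedSums

variable {α : Type*}

theorem sum_support_mul_eq_linearCombination {R : Type*} [NonAssocSemiring R] (w : α → R)
    (β : α →₀ ℕ) : ∑ p ∈ β.support, w p * (β p : R) = linearCombination ℕ w β := by
  simp only [linearCombination_apply, Finsupp.sum, nsmul_eq_mul']

theorem sum_support_ite_eq_linearCombination (P : α → Prop) [DecidablePred P] (β : α →₀ ℕ) :
    ∑ p ∈ β.support, (if P p then β p else 0) =
      linearCombination ℕ (fun p => if P p then 1 else 0) β := by
  simp only [linearCombination_apply, Finsupp.sum, smul_eq_mul, mul_boole]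

end WeightedSums

theorem boole_le_boole {M : Type*} [Zero M] [One M] [Preorder M] [ZeroLEOneClass M]
    {P Q : Prop} [Decidable P] [Decidable Q] (h : P → Q) :
    (if P then 1 else 0 : M) ≤ if Q then 1 else 0 := by
  by_cases hP : P
  · simp only [hP, h hP, if_true, le_refl]
  · rw [if_neg hP]
    split_ifs
    exacts [zero_le_one, le_rfl]

theorem ite_add_ite_le_of_lt {α : Type*} [LT α] (S : ℤ → Set α) {l m : α} (hlm : l < m)
    (i : ℤ) :
    ((if Odd i ∧ l ∈ S i then 1 else 0) + if Odd (i + 1) ∧ m ∈ S (i + 1) then 1 else 0 : ℕ) ≤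
      (if Even i ∧ ((∃ μ ∈ S (i - 1), μ < l) ∨ ∃ μ ∈ S (i + 1), l < μ) then 1 else 0) +
        if Even (i + 1) ∧ ((∃ μ ∈ S (i + 1 - 1), μ < m) ∨ ∃ μ ∈ S (i + 1 + 1), m < μ) then 1
        else 0 := by
  rcases Int.even_or_odd i with hi | hi
  · have hi' : Odd (i + 1) := hi.add_one
    simp only [hi, hi', Int.not_odd_iff_even.2 hi, Int.not_even_iff_odd.2 hi', true_and,
      false_and, if_false, zero_add, add_zero]
    exact boole_le_boole fun hm => Or.inr ⟨m, hm, hlm⟩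
  · have hi' : Even (i + 1) := hi.add_one
    simp only [hi, hi', Int.not_odd_iff_even.2 hi', Int.not_even_iff_odd.2 hi, true_and,
      false_and, if_false, zero_add, add_zero]
    exact boole_le_boole fun hl => Or.inl ⟨l, by rwa [add_sub_cancel_right], hlm⟩

theorem linearCombination_pureTable {M : Type*} [AddCommMonoid M] {k : ℕ}
    (w : ℤ × WDSeq k → M) (i : ℤ) (l m : WDSeq k) :
    linearCombination ℕ w (pureTable k i l m) = w (i, l) + w (i + 1, m) := by
  simp only [pureTable, map_add, linearCombination_single, one_smul]

theorem pure_table_combination_satisfies_convexity_inequalities_general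
    (k : ℕ) (β : (ℤ × WDSeq k) →₀ ℕ)
    (hdecomp : ∃ c : (ℤ × WDSeq k × WDSeq k) →₀ ℕ,
      (∀ t ∈ c.support, t.2.1 < t.2.2) ∧
        β = c.sum fun t m => m • pureTable k t.1 t.2.1 t.2.2) :
    (∑ p ∈ β.support, (-1 : ℚ) ^ (p.1 : ℤ) * (β p : ℚ)) = 0 ∧
      ∀ S : ℤ → Set (WDSeq k),
        (∀ i : ℤ, Odd i → ∀ a b c : WDSeq k,
          a ∈ S i → c ∈ S i → a ≤ b → b ≤ c → b ∈ S i) →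
        (∑ p ∈ β.support, if Odd p.1 ∧ p.2 ∈ S p.1 then β p else 0) ≤
          ∑ p ∈ β.support,
            if Even p.1 ∧
                ((∃ μ ∈ S (p.1 - 1), μ < p.2) ∨ (∃ μ ∈ S (p.1 + 1), p.2 < μ)) then
              β p else 0 := by
  obtain ⟨c, hc, rfl⟩ := hdecomp
  refine ⟨?_, fun S _ => ?_⟩
  · rw [sum_support_mul_eq_linearCombination]
    refine map_finsuppSum_nsmul_eq_zero _ c _ fun t _ => ?_
    rw [linearCombination_pureTable, zpow_add_one₀ (by norm_num : (-1 : ℚ) ≠ 0)]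
    ring
  · rw [sum_support_ite_eq_linearCombination, sum_support_ite_eq_linearCombination]
    refine map_finsuppSum_nsmul_le _ _ c _ fun t ht => ?_
    rw [linearCombination_pureTable, linearCombination_pureTable]
    exact ite_add_ite_le_of_lt S (hc t ht) t.1

/-- If a rank Betti table `β̃` (nonnegative integer entries,
finite support, indexed by `i ∈ ℤ` and `λ ∈ Y±`) is a finite positive integer
combination of homologically shifted pure tables `β̃(i; λ ⊊ μ)`, then:
(a) `∑_{i,λ} (−1)^i β̃_{i,λ} = 0`, and (b) for every choice of convex subsets
`S_i ⊆ Y±` for each odd `i`, we have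
`∑_{i even} ∑_{λ ∈ Γ_i} β̃_{i,λ} ≥ ∑_{i odd} ∑_{λ ∈ S_i} β̃_{i,λ}`, where
`Γ_i = {λ : μ ⊊ λ for some μ ∈ S_{i−1}} ∪ {λ : λ ⊊ μ for some μ ∈ S_{i+1}}`. -/
theorem pure_table_combination_satisfies_convexity_inequalities
    (k : ℕ) (hk : 1 ≤ k) (β : (ℤ × WDSeq k) →₀ ℕ)
    (hdecomp : ∃ c : (ℤ × WDSeq k × WDSeq k) →₀ ℕ,
      (∀ t ∈ c.support, t.2.1 < t.2.2) ∧
        β = c.sum fun t m => m • pureTable k t.1 t.2.1 t.2.2) :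
    (∑ p ∈ β.support, (-1 : ℚ) ^ (p.1 : ℤ) * (β p : ℚ)) = 0 ∧
      ∀ S : ℤ → Set (WDSeq k),
        (∀ i : ℤ, Odd i → ∀ a b c : WDSeq k,
          a ∈ S i → c ∈ S i → a ≤ b → b ≤ c → b ∈ S i) →
        (∑ p ∈ β.support, if Odd p.1 ∧ p.2 ∈ S p.1 then β p else 0) ≤
          ∑ p ∈ β.support,
            if Even p.1 ∧
                ((∃ μ ∈ S (p.1 - 1), μ < p.2) ∨ (∃ μ ∈ S (p.1 + 1), p.2 < μ)) then
              β p else 0 :=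
  pure_table_combination_satisfies_convexity_inequalities_general k β hdecomp
end
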